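/- arXiv:1401.0154 — 4 statements merged into one kernel-verified Lean document; each statement's English description precedes it below -/
import Mathlib

section
/- Let G=(V,D) be a finite symmetric digraph with weight w and 1-form θ, with twisted Szegedy walk U = SC and discriminant T = d_A d_B*. For every m ∈ ℓ²(V): T m = m if and only if d_A* m = d_B* m, and T m = −m if and only if d_A* m = −d_B* m. Consequently, if T m = m then U(d_A* m) = d_A* m, and if T m = −m then U(d_A* m) = −d_A* m. -/
open Finset

/-- A finite symmetric digraph: finite nonempty vertex and arc sets, origin/terminus maps,
and a fixed-point-free involutive arc reversal with `o (rev e) = t e`; every vertex has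
out-degree at least one. -/
structure SymDigraph where
  V : Type
  D : Type
  [fintypeV : Fintype V]
  [fintypeD : Fintype D]
  [decEqV : DecidableEq V]
  [decEqD : DecidableEq D]
  [nonemptyV : Nonempty V]
  o : D → V
  t : D → V
  rev : D → D
  rev_ne : ∀ e, rev e ≠ e
  rev_rev : ∀ e, rev (rev e) = e
  o_rev : ∀ e, o (rev e) = t e
  exists_arc : ∀ u : V, ∃ e : D, o e = u

attribute [instance] SymDigraph.fintypeV SymDigraph.fintypeD SymDigraph.decEqV
  SymDigraph.decEqD SymDigraph.nonemptyV

namespace SymDigraph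

variable (G : SymDigraph)

/-- out-degree of a vertex -/
def deg (u : G.V) : ℕ := (univ.filter fun e => G.o e = u).card

/-- a weight: never zero and with unit square-sum over the arcs leaving each vertex -/
def IsWeight (w : G.D → ℂ) : Prop :=
  (∀ e, w e ≠ 0) ∧
    ∀ u : G.V, ∑ e ∈ univ.filter (fun e => G.o e = u), ‖w e‖ ^ 2 = 1

/-- a 1-form: antisymmetric under arc reversal -/
def IsOneForm (θ : G.D → ℝ) : Prop := ∀ e, θ (G.rev e) = - θ e

/-- the boundary operator `d_A : ℓ²(D) → ℓ²(V)`, `(d_A φ)(v) = ∑_{e : o e = v} conj (w e) * φ e` -/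
noncomputable def dA (w : G.D → ℂ) : (G.D → ℂ) →ₗ[ℂ] (G.V → ℂ) where
  toFun φ := fun v => ∑ e ∈ univ.filter (fun e => G.o e = v), (starRingEnd ℂ) (w e) * φ e
  map_add' φ ψ := by
    funext v
    simp [mul_add, Finset.sum_add_distrib]
  map_smul' c φ := by
    funext v
    simp only [Pi.smul_apply, smul_eq_mul, RingHom.id_apply, Finset.mul_sum]
    exact Finset.sum_congr rfl fun e _ => by ring

/-- the boundary operator `d_B`, `(d_B φ)(v) = ∑_{e : o e = v} conj (w e) e^{-iθ(e)} φ(ē)` -/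
noncomputable def dB (w : G.D → ℂ) (θ : G.D → ℝ) : (G.D → ℂ) →ₗ[ℂ] (G.V → ℂ) where
  toFun φ := fun v => ∑ e ∈ univ.filter (fun e => G.o e = v),
      (starRingEnd ℂ) (w e) * Complex.exp (-(θ e : ℂ) * Complex.I) * φ (G.rev e)
  map_add' φ ψ := by
    funext v
    simp [mul_add, Finset.sum_add_distrib]
  map_smul' c φ := by
    funext v
    simp only [Pi.smul_apply, smul_eq_mul, RingHom.id_apply, Finset.mul_sum]
    exact Finset.sum_congr rfl fun e _ => by ring

/-- the coboundary operator `d_A* : ℓ²(V) → ℓ²(D)`, `(d_A* f)(e) = w e * f (o e)` -/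
noncomputable def dAadj (w : G.D → ℂ) : (G.V → ℂ) →ₗ[ℂ] (G.D → ℂ) where
  toFun f := fun e => w e * f (G.o e)
  map_add' f g := by funext e; simp [mul_add]
  map_smul' c f := by funext e; simp only [Pi.smul_apply, smul_eq_mul, RingHom.id_apply]; ring

/-- the coboundary operator `d_B*`, `(d_B* f)(e) = e^{-iθ(e)} w(ē) f (t e)` -/
noncomputable def dBadj (w : G.D → ℂ) (θ : G.D → ℝ) : (G.V → ℂ) →ₗ[ℂ] (G.D → ℂ) where
  toFun f := fun e => Complex.exp (-(θ e : ℂ) * Complex.I) * w (G.rev e) * f (G.t e)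
  map_add' f g := by funext e; simp [mul_add]
  map_smul' c f := by funext e; simp only [Pi.smul_apply, smul_eq_mul, RingHom.id_apply]; ring

/-- the twisted shift `S`, `(Sφ)(e) = e^{-iθ(e)} φ(ē)` -/
noncomputable def shiftS (θ : G.D → ℝ) : (G.D → ℂ) →ₗ[ℂ] (G.D → ℂ) where
  toFun φ := fun e => Complex.exp (-(θ e : ℂ) * Complex.I) * φ (G.rev e)
  map_add' φ ψ := by funext e; simp [mul_add]
  map_smul' c φ := by funext e; simp only [Pi.smul_apply, smul_eq_mul, RingHom.id_apply]; ring

/-- the coin operator `C = 2 d_A* d_A - I` -/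
noncomputable def coinC (w : G.D → ℂ) : (G.D → ℂ) →ₗ[ℂ] (G.D → ℂ) :=
  (2 : ℂ) • (G.dAadj w ∘ₗ G.dA w) - LinearMap.id

/-- the twisted Szegedy walk `U = S C` -/
noncomputable def walkU (w : G.D → ℂ) (θ : G.D → ℝ) : (G.D → ℂ) →ₗ[ℂ] (G.D → ℂ) :=
  G.shiftS θ ∘ₗ G.coinC w

/-- the discriminant operator `T = d_A d_B*` -/
noncomputable def discT (w : G.D → ℂ) (θ : G.D → ℝ) : (G.V → ℂ) →ₗ[ℂ] (G.V → ℂ) :=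
  G.dA w ∘ₗ G.dBadj w θ

/-- the standard Hermitian inner product on `ℓ²(D)` -/
noncomputable def innD (φ ψ : G.D → ℂ) : ℂ := ∑ e, (starRingEnd ℂ) (φ e) * ψ e

/-- the standard Hermitian inner product on `ℓ²(V)` -/
noncomputable def innV (f g : G.V → ℂ) : ℂ := ∑ v, (starRingEnd ℂ) (f v) * g v

end SymDigraph

/-
`d_A*` is an isometry with `d_A d_A* = 1` (the weight condition), and `S d_A* = d_B*`, so
`a := d_A* m` and `b := d_B* m` both have norm `‖m‖`, while `⟪a, b⟫ = ⟪m, T m⟫`. For `|c| = 1`,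
`T m = c m` makes `⟪c a, b⟫ = ‖m‖²`, the equality case of Cauchy–Schwarz, so `b = c a`;
conversely `b = c a` gives `T m = d_A b = c m`. Since the coin fixes `d_A*`, `U a = S a = b`.
-/

open WithLp ComplexConjugate
open scoped InnerProductSpace

namespace SymDigraph

variable (G : SymDigraph) (w : G.D → ℂ) (θ : G.D → ℝ)

theorem dA_dAadj (hw : G.IsWeight w) (f : G.V → ℂ) : G.dA w (G.dAadj w f) = f := by
  funext v
  have hterm : ∀ e ∈ univ.filter (fun e => G.o e = v),
      conj (w e) * (w e * f (G.o e)) = ((‖w e‖ ^ 2 : ℝ) : ℂ) * f v := by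
    intro e he
    rw [(mem_filter.mp he).2, ← mul_assoc, Complex.conj_mul']
    push_cast; rfl
  simp only [dA, dAadj, LinearMap.coe_mk, AddHom.coe_mk]
  rw [sum_congr rfl hterm, ← sum_mul, ← Complex.ofReal_sum, hw.2 v, Complex.ofReal_one, one_mul]

theorem shiftS_dAadj (f : G.V → ℂ) : G.shiftS θ (G.dAadj w f) = G.dBadj w θ f := by
  funext e
  simp only [shiftS, dAadj, dBadj, LinearMap.coe_mk, AddHom.coe_mk, G.o_rev, mul_assoc]

theorem coinC_dAadj (hw : G.IsWeight w) (f : G.V → ℂ) : G.coinC w (G.dAadj w f) = G.dAadj w f := by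
  rw [coinC, LinearMap.sub_apply, LinearMap.smul_apply, LinearMap.comp_apply, G.dA_dAadj w hw,
    LinearMap.id_apply, two_smul, add_sub_cancel_right]

theorem walkU_dAadj (hw : G.IsWeight w) (f : G.V → ℂ) :
    G.walkU w θ (G.dAadj w f) = G.dBadj w θ f := by
  rw [walkU, LinearMap.comp_apply, G.coinC_dAadj w hw, shiftS_dAadj]

theorem inner_dAadj_left (f : G.V → ℂ) (φ : G.D → ℂ) :
    ⟪toLp 2 (G.dAadj w f), toLp 2 φ⟫_ℂ = ⟪toLp 2 f, toLp 2 (G.dA w φ)⟫_ℂ := by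
  simp only [PiLp.inner_apply, RCLike.inner_apply, dA, dAadj, LinearMap.coe_mk, AddHom.coe_mk,
    map_mul, sum_mul]
  rw [← sum_fiberwise univ G.o]
  refine sum_congr rfl fun v _ => sum_congr rfl fun e he => ?_
  rw [(mem_filter.mp he).2]
  ring

theorem norm_dAadj (hw : G.IsWeight w) (f : G.V → ℂ) :
    ‖toLp 2 (G.dAadj w f)‖ = ‖toLp 2 f‖ := by
  have h := G.inner_dAadj_left w f (G.dAadj w f)
  rw [G.dA_dAadj w hw, inner_self_eq_norm_sq_to_K, inner_self_eq_norm_sq_to_K] at h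
  exact (sq_eq_sq₀ (norm_nonneg _) (norm_nonneg _)).mp (by exact_mod_cast h)

theorem norm_shiftS (φ : G.D → ℂ) : ‖toLp 2 (G.shiftS θ φ)‖ = ‖toLp 2 φ‖ := by
  rw [EuclideanSpace.norm_eq, EuclideanSpace.norm_eq]
  congr 1
  simp only [shiftS, LinearMap.coe_mk, AddHom.coe_mk, norm_mul, ← Complex.ofReal_neg,
    Complex.norm_exp_ofReal_mul_I, one_mul]
  exact Equiv.sum_comp (Function.Involutive.toPerm G.rev G.rev_rev) (fun e => ‖φ e‖ ^ 2)

theorem norm_dBadj (hw : G.IsWeight w) (f : G.V → ℂ) :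
    ‖toLp 2 (G.dBadj w θ f)‖ = ‖toLp 2 f‖ := by
  rw [← G.shiftS_dAadj, norm_shiftS, G.norm_dAadj w hw]

theorem discT_eq_smul_iff (hw : G.IsWeight w) {c : ℂ} (hc : ‖c‖ = 1) (m : G.V → ℂ) :
    G.discT w θ m = c • m ↔ G.dBadj w θ m = c • G.dAadj w m := by
  have hT : G.discT w θ m = G.dA w (G.dBadj w θ m) := rfl
  constructor
  · intro hm
    have hb : ‖toLp 2 (G.dBadj w θ m)‖ = ‖toLp 2 m‖ := G.norm_dBadj w θ hw m
    have hca : ‖toLp 2 (c • G.dAadj w m)‖ = ‖toLp 2 m‖ := by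
      rw [toLp_smul, norm_smul, hc, one_mul, G.norm_dAadj w hw]
    refine (toLp_injective 2
      (eq_of_norm_le_re_inner_eq_norm_sq (𝕜 := ℂ) (hca.trans hb.symm).le ?_)).symm
    rw [hb, toLp_smul, inner_smul_left, G.inner_dAadj_left, ← hT, hm, toLp_smul, inner_smul_right,
      inner_self_eq_norm_sq_to_K, ← mul_assoc, Complex.conj_mul', hc,
      Complex.ofReal_one, one_pow, one_mul]
    exact_mod_cast RCLike.ofReal_re (K := ℂ) _
  · intro hm
    rw [hT, hm, map_smul, G.dA_dAadj w hw]

end SymDigraph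

theorem discriminant_pm_one_eigenvectors_general (G : SymDigraph) (w : G.D → ℂ) (θ : G.D → ℝ)
    (hw : G.IsWeight w) :
    ∀ m : G.V → ℂ,
      (G.discT w θ m = m ↔ G.dAadj w m = G.dBadj w θ m) ∧
      (G.discT w θ m = -m ↔ G.dAadj w m = -(G.dBadj w θ m)) ∧
      (G.discT w θ m = m → G.walkU w θ (G.dAadj w m) = G.dAadj w m) ∧
      (G.discT w θ m = -m → G.walkU w θ (G.dAadj w m) = -(G.dAadj w m)) := by
  intro m
  have hone := G.discT_eq_smul_iff w θ hw (c := 1) (by simp) m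
  have hneg := G.discT_eq_smul_iff w θ hw (c := -1) (by simp) m
  simp only [one_smul, neg_one_smul] at hone hneg
  rw [G.walkU_dAadj w θ hw]
  exact ⟨hone.trans eq_comm, hneg.trans (eq_comm.trans neg_eq_iff_eq_neg), hone.mp, hneg.mp⟩

/-- For every `m ∈ ℓ²(V)`: `T m = m` iff `d_A* m = d_B* m`, and `T m = −m` iff
`d_A* m = −d_B* m`. Consequently, if `T m = m` then `U(d_A* m) = d_A* m`, and if `T m = −m`
then `U(d_A* m) = −d_A* m`. -/
theorem discriminant_pm_one_eigenvectors (G : SymDigraph) (w : G.D → ℂ) (θ : G.D → ℝ)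
    (hw : G.IsWeight w) (hθ : G.IsOneForm θ) :
    ∀ m : G.V → ℂ,
      (G.discT w θ m = m ↔ G.dAadj w m = G.dBadj w θ m) ∧
      (G.discT w θ m = -m ↔ G.dAadj w m = -(G.dBadj w θ m)) ∧
      (G.discT w θ m = m → G.walkU w θ (G.dAadj w m) = G.dAadj w m) ∧
      (G.discT w θ m = -m → G.walkU w θ (G.dAadj w m) = -(G.dAadj w m)) :=
  discriminant_pm_one_eigenvectors_general G w θ hw
end

section
/- Let G=(V,D) be a finite symmetric digraph with weight w and 1-form θ, with twisted Szegedy walk U = SC. Then ker(d_A) ∩ ker(d_B) = ( ran(d_A*) + ran(d_B*) )^⊥, and for every ψ ∈ ker(d_A) ∩ ker(d_B) one has U(ψ − Sψ) = ψ − Sψ and U(ψ + Sψ) = −(ψ + Sψ). -/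
open Finset

/-
`d_A*` and `d_B*` are the adjoints of `d_A` and `d_B` for the standard inner products; for `d_B`
this reindexes the sum over arcs by the reversal and uses `θ(ē) = -θ(e)`. Positive definiteness of
the inner product on `ℓ²(V)` then identifies the orthogonal complement of `ran d_A* + ran d_B*`
with `ker d_A ∩ ker d_B`. For the eigenvectors: `d_B = d_A ∘ S`, so both `ψ` and `Sψ` lie in
`ker d_A`, where `C = -1`; and `S² = 1`, so `U = SC` acts on `ψ ∓ Sψ` as `±1`.
-/

namespace SymDigraph

variable (G : SymDigraph)

lemma sum_comp_rev (F : G.D → ℂ) : ∑ e, F (G.rev e) = ∑ e, F e :=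
  Equiv.sum_comp (Function.Involutive.toPerm G.rev G.rev_rev) F

lemma sum_filter_o_mul (f : G.V → ℂ) (F : G.D → ℂ) :
    ∑ v, f v * ∑ e ∈ univ.filter (fun e => G.o e = v), F e = ∑ e, f (G.o e) * F e := by
  simp_rw [Finset.mul_sum]
  rw [← Finset.sum_fiberwise univ G.o]
  refine Finset.sum_congr rfl fun v _ => Finset.sum_congr rfl fun e he => ?_
  rw [(Finset.mem_filter.mp he).2]

lemma innD_add_left (χ₁ χ₂ ψ : G.D → ℂ) :
    G.innD (χ₁ + χ₂) ψ = G.innD χ₁ ψ + G.innD χ₂ ψ := by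
  simp only [innD, Pi.add_apply, map_add, add_mul, Finset.sum_add_distrib]

lemma innV_zero_right (f : G.V → ℂ) : G.innV f 0 = 0 := by
  simp [innV]

lemma eq_zero_of_innV_self_eq_zero {f : G.V → ℂ} (h : G.innV f f = 0) : f = 0 := by
  have hnormSq : ∑ v, Complex.normSq (f v) = 0 := by
    simpa [innV, Complex.mul_conj', Complex.normSq_apply] using congrArg Complex.re h
  funext v
  simpa using (Finset.sum_eq_zero_iff_of_nonneg fun v _ => Complex.normSq_nonneg (f v)).mp
    hnormSq v (mem_univ v)

lemma innD_dAadj (w : G.D → ℂ) (f : G.V → ℂ) (ψ : G.D → ℂ) :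
    G.innD (G.dAadj w f) ψ = G.innV f (G.dA w ψ) := by
  simp only [innD, innV, dAadj, dA, LinearMap.coe_mk, AddHom.coe_mk, sum_filter_o_mul, map_mul]
  exact Finset.sum_congr rfl fun e _ => by ring

lemma innD_dBadj (w : G.D → ℂ) {θ : G.D → ℝ} (hθ : G.IsOneForm θ) (f : G.V → ℂ)
    (ψ : G.D → ℂ) : G.innD (G.dBadj w θ f) ψ = G.innV f (G.dB w θ ψ) := by
  simp only [innD, innV, dBadj, dB, LinearMap.coe_mk, AddHom.coe_mk, sum_filter_o_mul]
  rw [← G.sum_comp_rev]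
  refine Finset.sum_congr rfl fun e _ => ?_
  rw [← G.o_rev (G.rev e), G.rev_rev, hθ e]
  simp only [map_mul, ← Complex.exp_conj, map_neg, Complex.conj_ofReal, Complex.conj_I,
    Complex.ofReal_neg]
  ring_nf

lemma dA_shiftS (w : G.D → ℂ) (θ : G.D → ℝ) (ψ : G.D → ℂ) :
    G.dA w (G.shiftS θ ψ) = G.dB w θ ψ := by
  funext v
  simp only [dA, dB, shiftS, LinearMap.coe_mk, AddHom.coe_mk, mul_assoc]

lemma shiftS_shiftS {θ : G.D → ℝ} (hθ : G.IsOneForm θ) (ψ : G.D → ℂ) :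
    G.shiftS θ (G.shiftS θ ψ) = ψ := by
  funext e
  simp only [shiftS, LinearMap.coe_mk, AddHom.coe_mk]
  rw [G.rev_rev, hθ e, ← mul_assoc, ← Complex.exp_add]
  simp

lemma coinC_of_dA_eq_zero (w : G.D → ℂ) {ψ : G.D → ℂ} (hψ : G.dA w ψ = 0) :
    G.coinC w ψ = -ψ := by
  simp [coinC, hψ]

theorem dA_eq_zero_and_dB_eq_zero_iff (w : G.D → ℂ) {θ : G.D → ℝ} (hθ : G.IsOneForm θ)
    (ψ : G.D → ℂ) :
    (G.dA w ψ = 0 ∧ G.dB w θ ψ = 0) ↔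
      ∀ χ ∈ LinearMap.range (G.dAadj w) ⊔ LinearMap.range (G.dBadj w θ), G.innD χ ψ = 0 := by
  constructor
  · rintro ⟨hA, hB⟩ χ hχ
    obtain ⟨_, ⟨f, rfl⟩, _, ⟨g, rfl⟩, rfl⟩ := Submodule.mem_sup.mp hχ
    rw [innD_add_left, innD_dAadj, G.innD_dBadj w hθ, hA, hB, innV_zero_right,
      innV_zero_right, add_zero]
  · intro h
    constructor
    · apply G.eq_zero_of_innV_self_eq_zero
      rw [← G.innD_dAadj]
      exact h _ (Submodule.mem_sup_left ⟨_, rfl⟩)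
    · apply G.eq_zero_of_innV_self_eq_zero
      rw [← G.innD_dBadj w hθ]
      exact h _ (Submodule.mem_sup_right ⟨_, rfl⟩)

theorem walkU_sub_shiftS_and_add_shiftS (w : G.D → ℂ) {θ : G.D → ℝ} (hθ : G.IsOneForm θ)
    {ψ : G.D → ℂ} (hA : G.dA w ψ = 0) (hB : G.dB w θ ψ = 0) :
    G.walkU w θ (ψ - G.shiftS θ ψ) = ψ - G.shiftS θ ψ ∧
      G.walkU w θ (ψ + G.shiftS θ ψ) = -(ψ + G.shiftS θ ψ) := by
  have hCψ := G.coinC_of_dA_eq_zero w hA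
  have hCSψ := G.coinC_of_dA_eq_zero w ((G.dA_shiftS w θ ψ).trans hB)
  have hSSψ := G.shiftS_shiftS hθ ψ
  simp only [walkU, LinearMap.comp_apply, map_sub, map_add, hCψ, hCSψ, map_neg, hSSψ]
  constructor <;> abel

end SymDigraph

theorem kernel_intersection_orthocomplement_general (G : SymDigraph) (w : G.D → ℂ) (θ : G.D → ℝ)
    (hθ : G.IsOneForm θ) :
    (∀ ψ : G.D → ℂ,
      (G.dA w ψ = 0 ∧ G.dB w θ ψ = 0) ↔
        ∀ χ ∈ LinearMap.range (G.dAadj w) ⊔ LinearMap.range (G.dBadj w θ),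
          G.innD χ ψ = 0) ∧
    (∀ ψ : G.D → ℂ, G.dA w ψ = 0 → G.dB w θ ψ = 0 →
      G.walkU w θ (ψ - G.shiftS θ ψ) = ψ - G.shiftS θ ψ ∧
      G.walkU w θ (ψ + G.shiftS θ ψ) = -(ψ + G.shiftS θ ψ)) :=
  ⟨G.dA_eq_zero_and_dB_eq_zero_iff w hθ,
    fun _ hA hB => G.walkU_sub_shiftS_and_add_shiftS w hθ hA hB⟩

/-- `ker d_A ∩ ker d_B` is exactly the orthogonal complement of
`L = ran d_A* + ran d_B*`, and for every `ψ ∈ ker d_A ∩ ker d_B` one has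
`U(ψ − Sψ) = ψ − Sψ` and `U(ψ + Sψ) = −(ψ + Sψ)`. -/
theorem kernel_intersection_orthocomplement (G : SymDigraph) (w : G.D → ℂ) (θ : G.D → ℝ)
    (hw : G.IsWeight w) (hθ : G.IsOneForm θ) :
    (∀ ψ : G.D → ℂ,
      (G.dA w ψ = 0 ∧ G.dB w θ ψ = 0) ↔
        ∀ χ ∈ LinearMap.range (G.dAadj w) ⊔ LinearMap.range (G.dBadj w θ),
          G.innD χ ψ = 0) ∧
    (∀ ψ : G.D → ℂ, G.dA w ψ = 0 → G.dB w θ ψ = 0 →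
      G.walkU w θ (ψ - G.shiftS θ ψ) = ψ - G.shiftS θ ψ ∧
      G.walkU w θ (ψ + G.shiftS θ ψ) = -(ψ + G.shiftS θ ψ)) :=
  kernel_intersection_orthocomplement_general G w θ hθ
end

section
/- Let G=(V,D) be a finite connected symmetric digraph and consider the Grover walk (1-form θ ≡ 0, weight w(e) = 1/√deg(o(e))), with shift (Sφ)(e) = φ(ē) and boundary operator d_A. Then the subspace M₊ := ker(d_A) ∩ ker(S + I) of ℓ²(D) equals the ℂ-linear span of { γ(c) : c an essential cycle of G }, where for a closed path c = (e₁,…,e_n), γ(c) := Σ_{j=1}^n (δ_{e_j} − δ_{ē_j}). Moreover dim M₊ = |E| − |V| + 1 with |E| = |D|/2, and U γ(c) = γ(c) for every closed path c, where U = SC is the Grover walk evolution with C = 2 d_A* d_A − I. -/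
/-!
With the Grover weight, `d_A` is the divergence `φ ↦ (v ↦ ∑_{o e = v} φ e)` rescaled by
`1/√deg v` at each vertex, and `ker (S + I)` consists of the antisymmetric arc functions, so
`M₊` is the space of antisymmetric divergence-free flows. For a closed path, the divergence of
`γ(c)` telescopes around the path, so `γ(c) ∈ M₊`. Then `C γ = -γ` and `S γ = -γ`, so `U γ = γ`.

Conversely, take a nonzero flow `φ`. Its support contains a non-backtracking walk: at the head
of a support arc `e`, the reverse arc is in the support and the divergence there vanishes, so some
other outgoing arc is in the support too. Cutting the walk at its first repeated vertex gives an
essential cycle inside the support. Subtracting a suitable multiple of its `γ` shrinks the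
support, and induction shows `φ` lies in the span.

For the dimension, the divergence maps the `|D|/2`-dimensional space of antisymmetric functions
onto the functions of total sum zero, a space of dimension `|V| - 1` (onto because `G` is
connected: `δ_u - δ_v` is the divergence of a sum of `δ_e - δ_ē` along a path), and `M₊` is
the kernel of this map.
-/

open Finset

/-- `G` is connected: any two vertices are joined by a (possibly empty) path of arcs. -/
def SymDigraph.Connected (G : SymDigraph) : Prop :=
  ∀ u v : G.V, Relation.ReflTransGen (fun a b => ∃ e : G.D, G.o e = a ∧ G.t e = b) u v

/-- a closed path of length `n`: consecutive arcs are composable, cyclically. -/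
def SymDigraph.IsClosedPath (G : SymDigraph) {n : ℕ} (c : Fin n → G.D) : Prop :=
  ∀ j : Fin n,
    G.t (c j) = G.o (c ⟨(j.1 + 1) % n, Nat.mod_lt _ (Nat.lt_of_le_of_lt (Nat.zero_le _) j.2)⟩)

/-- the Grover weight `w(e) = 1/√(deg (o e))` -/
noncomputable def SymDigraph.groverWeight (G : SymDigraph) : G.D → ℂ :=
  fun e => (Real.sqrt (G.deg (G.o e)) : ℂ)⁻¹

/-- the standard basis vector `δ_e ∈ ℓ²(D)` -/
noncomputable def SymDigraph.deltaArc (G : SymDigraph) (e : G.D) : G.D → ℂ :=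
  fun f => if f = e then 1 else 0

/-- `γ(c) = ∑_j (δ_{e_j} − δ_{ē_j})` for a (closed) path `c` -/
noncomputable def SymDigraph.gammaVec (G : SymDigraph) {n : ℕ} (c : Fin n → G.D) : G.D → ℂ :=
  ∑ j : Fin n, (G.deltaArc (c j) - G.deltaArc (G.rev (c j)))

theorem LinearMap.mem_ker_funLeft_add_id_iff {α K : Type*} [Ring K] {r : α → α} {φ : α → K} :
    φ ∈ LinearMap.ker (LinearMap.funLeft K K r + LinearMap.id) ↔ ∀ x, φ (r x) = -φ x := by
  simp only [LinearMap.mem_ker, funext_iff, LinearMap.add_apply, LinearMap.funLeft_apply,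
    LinearMap.id_apply, Pi.neg_apply, add_eq_zero_iff_eq_neg]

theorem Finite.exists_lt_map_eq_injOn_Iio {α : Type*} [Finite α] (f : ℕ → α) :
    ∃ i j, i < j ∧ f i = f j ∧ Set.InjOn f (Set.Iio j) := by
  classical
  have hrep : ∃ j, ∃ i < j, f i = f j := by
    obtain ⟨i, j, hij, he⟩ := Finite.exists_ne_map_eq_of_infinite f
    rcases lt_or_gt_of_ne hij with h | h
    · exact ⟨j, i, h, he⟩
    · exact ⟨i, j, h, he.symm⟩
  obtain ⟨i, hi, he⟩ := Nat.find_spec hrep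
  refine ⟨i, Nat.find hrep, hi, he, fun p hp q hq hpq => ?_⟩
  by_contra hne
  rcases lt_or_gt_of_ne hne with h | h
  · exact Nat.find_min hrep hq ⟨p, h, hpq⟩
  · exact Nat.find_min hrep hp ⟨q, h, hpq.symm⟩

namespace Function.Involutive

variable {α : Type*} {r : α → α}

theorem exists_finset_apply_mem_iff_notMem [Fintype α] (hr : Involutive r)
    (hfix : ∀ x, r x ≠ x) : ∃ O : Finset α, ∀ x, r x ∈ O ↔ x ∉ O := by
  let σ := Fintype.equivFin α
  refine ⟨univ.filter fun x => σ x < σ (r x), fun x => ?_⟩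
  have hne : σ x ≠ σ (r x) := fun h => hfix x (σ.injective h).symm
  simp only [mem_filter, mem_univ, true_and, hr x, not_lt]
  exact ⟨le_of_lt, fun h => lt_of_le_of_ne h hne.symm⟩

theorem two_mul_card_eq_card_of_apply_mem_iff_notMem [Fintype α] (hr : Involutive r)
    {O : Finset α} (hO : ∀ x, r x ∈ O ↔ x ∉ O) : 2 * #O = Fintype.card α := by
  classical
  have himage : O.image r = Oᶜ := by
    ext x
    rw [mem_image, mem_compl, ← hO]
    exact ⟨fun ⟨y, hy, hyx⟩ => hyx ▸ (hr y).symm ▸ hy, fun hx => ⟨r x, hx, hr x⟩⟩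
  have hcard : #Oᶜ = #O := by rw [← himage, card_image_of_injective O hr.injective]
  have := card_add_card_compl O
  omega

theorem finrank_ker_funLeft_add_id {K : Type*} [Ring K] [StrongRankCondition K]
    (hr : Involutive r) {O : Finset α} (hO : ∀ x, r x ∈ O ↔ x ∉ O) :
    Module.finrank K (LinearMap.ker (LinearMap.funLeft K K r + LinearMap.id)) = #O := by
  classical
  set A := LinearMap.ker (LinearMap.funLeft K K r + LinearMap.id)
  let restrict : A →ₗ[K] (O → K) := (LinearMap.funLeft K K ((↑) : O → α)).domRestrict A
  have hinj : Function.Injective restrict := by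
    refine (injective_iff_map_eq_zero restrict).mpr fun φ hφ => Subtype.ext (funext fun x => ?_)
    have hO0 : ∀ y (hy : y ∈ O), φ.1 y = 0 := fun y hy => congrFun hφ ⟨y, hy⟩
    by_cases hx : x ∈ O
    · exact hO0 x hx
    · simpa [LinearMap.mem_ker_funLeft_add_id_iff.mp φ.2 x] using hO0 (r x) ((hO x).mpr hx)
  have hsurj : Function.Surjective restrict := by
    intro g
    let g' : α → K := fun y => if h : y ∈ O then g ⟨y, h⟩ else 0
    let φ : α → K := fun y => if y ∈ O then g' y else -g' (r y)
    refine ⟨⟨φ, LinearMap.mem_ker_funLeft_add_id_iff.mpr fun x => ?_⟩,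
      funext fun y => by simp [restrict, φ, g']⟩
    by_cases hx : x ∈ O
    · have hrx : r x ∉ O := fun h => (hO x).mp h hx
      simp [φ, hx, hrx, hr x]
    · simp [φ, hx, (hO x).mpr hx]
  calc Module.finrank K A = Module.finrank K (O → K) :=
        (LinearEquiv.ofBijective restrict ⟨hinj, hsurj⟩).finrank_eq
    _ = #O := by simp

theorem two_mul_finrank_ker_funLeft_add_id [Fintype α] (K : Type*) [Ring K]
    [StrongRankCondition K] (hr : Involutive r) (hfix : ∀ x, r x ≠ x) :
    2 * Module.finrank K (LinearMap.ker (LinearMap.funLeft K K r + LinearMap.id)) =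
      Fintype.card α := by
  obtain ⟨O, hO⟩ := hr.exists_finset_apply_mem_iff_notMem hfix
  rw [hr.finrank_ker_funLeft_add_id hO, hr.two_mul_card_eq_card_of_apply_mem_iff_notMem hO]

end Function.Involutive

namespace SymDigraph

section Operators

variable (G : SymDigraph)

theorem rev_involutive : Function.Involutive G.rev := G.rev_rev

theorem deg_pos (u : G.V) : 0 < G.deg u := by
  obtain ⟨e, he⟩ := G.exists_arc u
  exact card_pos.mpr ⟨e, by simp [he]⟩

theorem shiftS_zero : G.shiftS 0 = LinearMap.funLeft ℂ ℂ G.rev := by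
  ext φ e
  simp [shiftS]

theorem deltaArc_eq_single (e : G.D) : G.deltaArc e = Pi.single e 1 := by
  ext f
  simp [deltaArc, Pi.single_apply]

theorem gammaVec_eq_sum_single {n : ℕ} (c : Fin n → G.D) :
    G.gammaVec c = ∑ j, (Pi.single (c j) 1 - Pi.single (G.rev (c j)) 1) := by
  simp only [gammaVec, deltaArc_eq_single]

theorem dA_one_apply (φ : G.D → ℂ) (v : G.V) :
    G.dA 1 φ v = ∑ e ∈ univ.filter (fun e => G.o e = v), φ e := by
  simp [dA]

theorem dA_apply_of_forall_eq_comp_o {w : G.D → ℂ} (s : G.V → ℂ) (hw : ∀ e, w e = s (G.o e))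
    (φ : G.D → ℂ) (v : G.V) : G.dA w φ v = starRingEnd ℂ (s v) * G.dA 1 φ v := by
  rw [dA_one_apply, mul_sum]
  refine sum_congr rfl fun e he => ?_
  rw [hw, (mem_filter.mp he).2]

theorem ker_dA_of_forall_eq_comp_o {w : G.D → ℂ} (s : G.V → ℂ) (hs : ∀ v, s v ≠ 0)
    (hw : ∀ e, w e = s (G.o e)) : LinearMap.ker (G.dA w) = LinearMap.ker (G.dA 1) := by
  ext φ
  simp only [LinearMap.mem_ker, funext_iff, Pi.zero_apply, G.dA_apply_of_forall_eq_comp_o s hw,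
    mul_eq_zero, map_eq_zero, hs, false_or]

theorem ker_dA_groverWeight : LinearMap.ker (G.dA G.groverWeight) = LinearMap.ker (G.dA 1) :=
  G.ker_dA_of_forall_eq_comp_o (fun v => (Real.sqrt (G.deg v) : ℂ)⁻¹)
    (fun v => by simpa using (G.deg_pos v).ne') fun _ => rfl

theorem dA_one_single (e : G.D) : G.dA 1 (Pi.single e 1) = Pi.single (G.o e) 1 := by
  ext v
  rw [dA_one_apply, sum_pi_single']
  simp [Pi.single_apply, eq_comm]

theorem dA_one_single_sub_single_rev (e : G.D) :
    G.dA 1 (Pi.single e 1 - Pi.single (G.rev e) 1) =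
      Pi.single (G.o e) 1 - Pi.single (G.t e) 1 := by
  rw [map_sub, dA_one_single, dA_one_single, o_rev]

def antisymm : Submodule ℂ (G.D → ℂ) :=
  LinearMap.ker (LinearMap.funLeft ℂ ℂ G.rev + LinearMap.id)

theorem mem_antisymm_iff {φ : G.D → ℂ} : φ ∈ G.antisymm ↔ ∀ e, φ (G.rev e) = -φ e :=
  LinearMap.mem_ker_funLeft_add_id_iff

theorem single_sub_single_rev_mem_antisymm (e : G.D) :
    Pi.single e 1 - Pi.single (G.rev e) 1 ∈ G.antisymm := by
  rw [mem_antisymm_iff]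
  intro f
  simp only [Pi.sub_apply, Pi.single_apply, G.rev_involutive.injective.eq_iff,
    G.rev_involutive.eq_iff]
  split_ifs <;> simp

theorem two_mul_finrank_antisymm : 2 * Module.finrank ℂ G.antisymm = Fintype.card G.D :=
  G.rev_involutive.two_mul_finrank_ker_funLeft_add_id ℂ G.rev_ne

noncomputable def cycleSpace : Submodule ℂ (G.D → ℂ) := LinearMap.ker (G.dA 1) ⊓ G.antisymm

theorem ker_dA_groverWeight_inf_ker_shiftS :
    LinearMap.ker (G.dA G.groverWeight) ⊓ LinearMap.ker (G.shiftS 0 + LinearMap.id) =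
      G.cycleSpace := by
  rw [ker_dA_groverWeight, shiftS_zero]
  rfl

theorem walkU_apply_of_mem_ker {w : G.D → ℂ} {θ : G.D → ℝ} {φ : G.D → ℂ}
    (hA : φ ∈ LinearMap.ker (G.dA w)) (hS : φ ∈ LinearMap.ker (G.shiftS θ + LinearMap.id)) :
    G.walkU w θ φ = φ := by
  rw [LinearMap.mem_ker] at hA hS
  have hC : G.coinC w φ = -φ := by simp [coinC, hA]
  rw [walkU, LinearMap.comp_apply, hC, map_neg, neg_eq_iff_add_eq_zero]
  exact hS

end Operators

section Cycles

variable {G : SymDigraph} {n : ℕ} {c : Fin n → G.D}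

theorem IsClosedPath.t_eq_o_finRotate (hc : G.IsClosedPath c) (j : Fin n) :
    G.t (c j) = G.o (c (finRotate n j)) := by
  obtain _ | m := n
  · exact j.elim0
  rw [hc j, finRotate_apply]
  congr 2
  ext
  simp [Fin.val_add]

theorem IsClosedPath.dA_one_gammaVec (hc : G.IsClosedPath c) : G.dA 1 (G.gammaVec c) = 0 := by
  rw [gammaVec_eq_sum_single, map_sum]
  simp only [dA_one_single_sub_single_rev, hc.t_eq_o_finRotate, sum_sub_distrib]
  exact sub_eq_zero.mpr (Equiv.sum_comp (finRotate n) fun j => Pi.single (G.o (c j)) 1).symm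

theorem gammaVec_mem_antisymm (c : Fin n → G.D) : G.gammaVec c ∈ G.antisymm := by
  rw [gammaVec_eq_sum_single]
  exact Submodule.sum_mem _ fun j _ => G.single_sub_single_rev_mem_antisymm (c j)

theorem IsClosedPath.gammaVec_mem_cycleSpace (hc : G.IsClosedPath c) :
    G.gammaVec c ∈ G.cycleSpace :=
  ⟨hc.dA_one_gammaVec, gammaVec_mem_antisymm c⟩

theorem gammaVec_apply_self_eq_one (c : Fin n → G.D) (m : Fin n)
    (hinj : ∀ k, c k = c m → k = m) (hrev : ∀ k, G.rev (c k) ≠ c m) :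
    G.gammaVec c (c m) = 1 := by
  rw [gammaVec_eq_sum_single, Finset.sum_apply, sum_eq_single m]
  · simp [Ne.symm (hrev m)]
  · intro k _ hk
    have hne : c m ≠ c k := fun h => hk (hinj k h.symm)
    simp [hne, Ne.symm (hrev k)]
  · simp

theorem gammaVec_apply_eq_zero {φ : G.D → ℂ} (hφ : φ ∈ G.antisymm) (hc : ∀ j, φ (c j) ≠ 0)
    {x : G.D} (hx : φ x = 0) : G.gammaVec c x = 0 := by
  have hne : ∀ j, c j ≠ x := fun j h => hc j (h ▸ hx)
  have hne_rev : ∀ j, G.rev (c j) ≠ x := fun j h =>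
    hc j (by rw [← neg_eq_zero, ← G.mem_antisymm_iff.mp hφ, h, hx])
  simp [gammaVec_eq_sum_single, fun j => Ne.symm (hne j), fun j => Ne.symm (hne_rev j)]

theorem exists_next_arc {φ : G.D → ℂ} (hφ : φ ∈ G.cycleSpace) {e : G.D} (he : φ e ≠ 0) :
    ∃ f, G.o f = G.t e ∧ f ≠ G.rev e ∧ φ f ≠ 0 := by
  by_contra! h
  have hdiv : ∑ f ∈ univ.filter (fun f => G.o f = G.t e), φ f = 0 := by
    rw [← dA_one_apply]
    exact congrFun (LinearMap.mem_ker.mp hφ.1) _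
  rw [sum_eq_single_of_mem (G.rev e) (by simp [o_rev])
      fun f hf hne => h f (mem_filter.mp hf).2 hne, G.mem_antisymm_iff.mp hφ.2] at hdiv
  exact he (neg_eq_zero.mp hdiv)

theorem exists_nonBacktracking_seq {φ : G.D → ℂ} (hφ : φ ∈ G.cycleSpace) {e : G.D}
    (he : φ e ≠ 0) :
    ∃ a : ℕ → G.D, (∀ k, φ (a k) ≠ 0) ∧ (∀ k, G.o (a (k + 1)) = G.t (a k)) ∧
      ∀ k, a (k + 1) ≠ G.rev (a k) := by
  choose next hnext using fun f : {f // φ f ≠ 0} => exists_next_arc hφ f.2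
  let step : {f // φ f ≠ 0} → {f // φ f ≠ 0} := fun f => ⟨next f, (hnext f).2.2⟩
  refine ⟨fun k => (step^[k] ⟨e, he⟩).1, fun k => (step^[k] _).2, fun k => ?_, fun k => ?_⟩
  · dsimp only
    rw [Function.iterate_succ_apply']
    exact (hnext _).1
  · dsimp only
    rw [Function.iterate_succ_apply']
    exact (hnext _).2.1

/-- The walk is cut at its first repeated vertex. The last arc of the cycle so obtained is the
reverse of none of its arcs (that would force a backtrack or a fixed point of `rev`), so `γ` is
`1` there. -/
theorem exists_essentialCycle_of_nonBacktracking (a : ℕ → G.D)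
    (hwalk : ∀ k, G.o (a (k + 1)) = G.t (a k)) (hnb : ∀ k, a (k + 1) ≠ G.rev (a k)) :
    ∃ (i n : ℕ) (_ : 0 < n), G.IsClosedPath (fun j : Fin n => a (i + j)) ∧
      Function.Injective (fun j : Fin n => G.o (a (i + j))) ∧
      G.gammaVec (fun j : Fin n => a (i + j)) (a (i + (n - 1))) = 1 := by
  obtain ⟨i, j, hij, hrep, hinj⟩ := Finite.exists_lt_map_eq_injOn_Iio (G.o ∘ a)
  have inj : ∀ p q, p < j → q < j → G.o (a p) = G.o (a q) → p = q :=
    fun p q hp hq h => hinj (Set.mem_Iio.mpr hp) (Set.mem_Iio.mpr hq) h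
  refine ⟨i, j - i, by omega, fun m => ?_, fun m m' h => Fin.ext ?_, ?_⟩
  · show G.t (a (i + m)) = G.o (a (i + (m + 1) % (j - i)))
    rw [← hwalk]
    rcases (show (m : ℕ) + 1 ≤ j - i from m.2).lt_or_eq with hm | hm
    · rw [Nat.mod_eq_of_lt hm, add_assoc]
    · rw [hm, Nat.mod_self, add_zero, show i + m + 1 = j by omega]
      exact hrep.symm
  · have := inj _ _ (by omega) (by omega) h
    omega
  · have hlast : i + (j - i - 1) = j - 1 := by omega
    refine gammaVec_apply_self_eq_one _ ⟨j - i - 1, by omega⟩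
      (fun k hk => Fin.ext ?_) (fun k hk => ?_)
    · have := inj _ _ (by omega) (by omega) (congrArg G.o hk)
      simp only at this ⊢
      omega
    · simp only [hlast] at hk
      have ho : G.o (a (i + k + 1)) = G.o (a (j - 1)) := by rw [hwalk, ← o_rev, hk]
      rcases (show i + k + 1 ≤ j by omega).lt_or_eq with hlt | heq
      · have := inj _ _ hlt (by omega) ho
        exact hnb (i + k) (by rw [this, ← hk])
      · exact G.rev_ne _ (by rwa [show i + k = j - 1 by omega] at hk)

end Cycles

section Span

variable (G : SymDigraph)

theorem cycleSpace_le_span :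
    G.cycleSpace ≤ Submodule.span ℂ {x : G.D → ℂ |
      ∃ (n : ℕ) (_ : 0 < n) (c : Fin n → G.D), G.IsClosedPath c ∧
        Function.Injective (fun j => G.o (c j)) ∧ x = G.gammaVec c} := by
  intro φ hφ
  induction hN : (Function.support φ).ncard using Nat.strong_induction_on generalizing φ with
  | _ N ih =>
  by_cases hφ0 : φ = 0
  · exact hφ0 ▸ Submodule.zero_mem _
  obtain ⟨e, he⟩ := Function.support_nonempty_iff.mpr hφ0
  obtain ⟨a, ha, hwalk, hnb⟩ := exists_nonBacktracking_seq hφ he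
  obtain ⟨i, n, hn, hclosed, hinj, hlast⟩ := exists_essentialCycle_of_nonBacktracking a hwalk hnb
  set γ := G.gammaVec fun j : Fin n => a (i + j)
  set ψ := φ - φ (a (i + (n - 1))) • γ
  have hψ : ψ ∈ G.cycleSpace :=
    G.cycleSpace.sub_mem hφ (G.cycleSpace.smul_mem _ hclosed.gammaVec_mem_cycleSpace)
  have hsupp : Function.support ψ ⊂ Function.support φ := by
    have hsub : Function.support ψ ⊆ Function.support φ := fun x hx hφx =>
      hx (by simp [ψ, hφx, γ, gammaVec_apply_eq_zero hφ.2 (fun j => ha (i + j)) hφx])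
    exact (Set.ssubset_iff_of_subset hsub).mpr ⟨a (i + (n - 1)), ha _, by simp [ψ, hlast]⟩
  have hψspan := ih _ (hN ▸ Set.ncard_lt_ncard hsupp) hψ rfl
  rw [show φ = ψ + φ (a (i + (n - 1))) • γ by simp [ψ]]
  exact Submodule.add_mem _ hψspan
    (Submodule.smul_mem _ _ (Submodule.subset_span ⟨n, hn, _, hclosed, hinj, rfl⟩))

theorem cycleSpace_eq_span :
    G.cycleSpace = Submodule.span ℂ {x : G.D → ℂ |
      ∃ (n : ℕ) (_ : 0 < n) (c : Fin n → G.D), G.IsClosedPath c ∧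
        Function.Injective (fun j => G.o (c j)) ∧ x = G.gammaVec c} := by
  refine le_antisymm G.cycleSpace_le_span (Submodule.span_le.mpr ?_)
  rintro _ ⟨n, -, c, hc, -, rfl⟩
  exact hc.gammaVec_mem_cycleSpace

end Span

section Dimension

variable (G : SymDigraph)

theorem sum_dA_one_eq_zero {φ : G.D → ℂ} (hφ : φ ∈ G.antisymm) : ∑ v, G.dA 1 φ v = 0 := by
  simp only [dA_one_apply]
  rw [sum_fiberwise]
  exact sum_ninvolution G.rev (fun e => by rw [G.mem_antisymm_iff.mp hφ, add_neg_cancel])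
    (fun e _ => G.rev_ne e) (fun _ => mem_univ _) G.rev_rev

theorem single_sub_single_mem_range {u v : G.V}
    (h : Relation.ReflTransGen (fun a b => ∃ e : G.D, G.o e = a ∧ G.t e = b) u v) :
    Pi.single u 1 - Pi.single v 1 ∈ LinearMap.range ((G.dA 1).domRestrict G.antisymm) := by
  induction h with
  | refl => simp
  | @tail b c _ hbc ih =>
    obtain ⟨e, rfl, rfl⟩ := hbc
    rw [← sub_add_sub_cancel _ (Pi.single (G.o e) 1)]
    exact Submodule.add_mem _ ih
      ⟨⟨_, G.single_sub_single_rev_mem_antisymm e⟩, G.dA_one_single_sub_single_rev e⟩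

theorem range_dA_one_domRestrict_antisymm (hG : G.Connected) :
    LinearMap.range ((G.dA 1).domRestrict G.antisymm) =
      LinearMap.ker (∑ v, LinearMap.proj v : Module.Dual ℂ (G.V → ℂ)) := by
  refine le_antisymm ?_ fun f hf => ?_
  · rintro _ ⟨φ, rfl⟩
    simpa using G.sum_dA_one_eq_zero φ.2
  · have hsum : ∑ v, f v = 0 := by simpa using hf
    let v₀ : G.V := Classical.arbitrary G.V
    have hf : f = ∑ v, f v • (Pi.single v 1 - Pi.single v₀ 1) := by
      simp only [smul_sub, sum_sub_distrib, ← sum_smul, hsum, zero_smul, sub_zero]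
      ext w
      simp [Pi.single_apply]
    rw [hf]
    exact Submodule.sum_mem _ fun v _ =>
      Submodule.smul_mem _ _ (G.single_sub_single_mem_range (hG v v₀))

theorem finrank_cycleSpace (hG : G.Connected) :
    (Module.finrank ℂ G.cycleSpace : ℤ) = Fintype.card G.D / 2 - Fintype.card G.V + 1 := by
  let L := (G.dA 1).domRestrict G.antisymm
  have hker : Module.finrank ℂ (LinearMap.ker L) = Module.finrank ℂ G.cycleSpace := by
    rw [← Submodule.finrank_map_subtype_eq, LinearMap.ker_domRestrict,
      Submodule.map_comap_subtype, cycleSpace, inf_comm]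
  have hrange : Module.finrank ℂ (LinearMap.range L) + 1 = Fintype.card G.V := by
    rw [G.range_dA_one_domRestrict_antisymm hG, Module.Dual.finrank_ker_add_one_of_ne_zero,
      Module.finrank_fintype_fun_eq_card]
    intro h
    simpa using LinearMap.congr_fun h (Pi.single (Classical.arbitrary G.V) 1)
  have hrank := L.finrank_range_add_finrank_ker
  have hanti := G.two_mul_finrank_antisymm
  omega

end Dimension

end SymDigraph

/-- For the Grover walk (`θ ≡ 0`, Grover weight) on a connected finite
symmetric digraph: `M₊ := ker d_A ∩ ker(S + I)` equals the span of `γ(c)` over essential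
cycles `c`; `dim M₊ = |E| − |V| + 1` (with `|E| = |D|/2`); and `U γ(c) = γ(c)` for every
closed path `c`. -/
theorem grover_plus_one_eigenspace (G : SymDigraph) (hG : G.Connected) :
    (LinearMap.ker (G.dA G.groverWeight) ⊓
        LinearMap.ker (G.shiftS 0 + LinearMap.id)
      = Submodule.span ℂ {x : G.D → ℂ |
          ∃ (n : ℕ) (_ : 0 < n) (c : Fin n → G.D), G.IsClosedPath c ∧
            Function.Injective (fun j => G.o (c j)) ∧ x = G.gammaVec c}) ∧
    ((Module.finrank ℂ
        ↥(LinearMap.ker (G.dA G.groverWeight) ⊓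
          LinearMap.ker (G.shiftS 0 + LinearMap.id)) : ℤ)
      = (Fintype.card G.D : ℤ) / 2 - (Fintype.card G.V : ℤ) + 1) ∧
    (∀ (n : ℕ), 0 < n → ∀ c : Fin n → G.D, G.IsClosedPath c →
      G.walkU G.groverWeight 0 (G.gammaVec c) = G.gammaVec c) := by
  rw [G.ker_dA_groverWeight_inf_ker_shiftS]
  refine ⟨G.cycleSpace_eq_span, G.finrank_cycleSpace hG, fun n _ c hc => ?_⟩
  have hγ := hc.gammaVec_mem_cycleSpace
  rw [← G.ker_dA_groverWeight_inf_ker_shiftS] at hγ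
  exact G.walkU_apply_of_mem_ker hγ.1 hγ.2
end

section
/- Let d ≥ 2 and let U = SC be the Grover walk on ℤ^d. Then localization occurs: there exists Ψ₀ ∈ ℓ²(ℤ^d × A) with ‖Ψ₀‖ = 1 such that limsup_{n→∞} Σ_{a∈A} |(UⁿΨ₀)(0,a)|² > 0, where 0 denotes the origin of ℤ^d. -/
open Finset

/-- sites of the `d`-dimensional integer lattice -/
abbrev Site (d : ℕ) := Fin d → ℤ

/-- labels of the `2d` arcs leaving each site: a direction `j` and a sign (`true ↔ +1`) -/
abbrev ArcLabel (d : ℕ) := Fin d × Bool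

/-- the sign `σ ∈ {+1, −1}` of an arc label -/
def sgn (b : Bool) : ℤ := if b then 1 else -1

/-- the endpoint `x + σ e_j` of the arc `(x, (j, σ))` -/
def stepSite {d : ℕ} (x : Site d) (j : Fin d) (b : Bool) : Site d :=
  x + Pi.single j (sgn b)

/-- the flip-flop shift `(Sψ)(x,(j,σ)) = ψ(x + σ e_j, (j, −σ))` -/
def groverShift {d : ℕ} (ψ : Site d × ArcLabel d → ℂ) : Site d × ArcLabel d → ℂ :=
  fun p => ψ (stepSite p.1 p.2.1 p.2.2, (p.2.1, !p.2.2))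

/-- the sitewise Grover coin `(Cψ)(x,a) = (1/d) ∑_{b} ψ(x,b) − ψ(x,a)` -/
noncomputable def groverCoin {d : ℕ} (ψ : Site d × ArcLabel d → ℂ) : Site d × ArcLabel d → ℂ :=
  fun p => (1 / (d : ℂ)) * (∑ b : ArcLabel d, ψ (p.1, b)) - ψ p

/-- the Grover walk `U = SC` on `ℤ^d` -/
noncomputable def groverU {d : ℕ} (ψ : Site d × ArcLabel d → ℂ) : Site d × ArcLabel d → ℂ :=
  groverShift (groverCoin ψ)

/-- the standard basis vector `δ_q` of `ℓ²(ℤ^d × A)` -/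
noncomputable def deltaPt {d : ℕ} (q : Site d × ArcLabel d) : Site d × ArcLabel d → ℂ :=
  fun p => if p = q then 1 else 0

/-!
The Grover walk has a finitely supported eigenvector with eigenvalue `−1`. On the unit square
spanned by `e_i` and `e_j` (`i ≠ j`) put `+1` on both arcs of each edge parallel to `e_i` and
`−1` on both arcs of each edge parallel to `e_j`. This state is symmetric under arc reversal, so
the flip-flop shift fixes it, and at every site its values sum to zero, so the Grover coin acts
on it as `−1`. Once normalized, its finding probability at the origin is constant in time and
nonzero.
-/

section Walk

variable {d : ℕ}

def arcReverse (p : Site d × ArcLabel d) : Site d × ArcLabel d :=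
  (stepSite p.1 p.2.1 p.2.2, (p.2.1, !p.2.2))

lemma sgn_not (b : Bool) : sgn (!b) = -sgn b := by cases b <;> rfl

lemma stepSite_stepSite_not (x : Site d) (j : Fin d) (b : Bool) :
    stepSite (stepSite x j b) j (!b) = x := by
  simp [stepSite, sgn_not, add_assoc, ← Pi.single_add]

lemma stepSite_true (x : Site d) (j : Fin d) : stepSite x j true = x + Pi.single j 1 := rfl

lemma arcReverse_involutive : Function.Involutive (arcReverse (d := d)) := by
  rintro ⟨x, j, b⟩
  simp [arcReverse, stepSite_stepSite_not]

lemma groverShift_eq_comp (ψ : Site d × ArcLabel d → ℂ) : groverShift ψ = ψ ∘ arcReverse := rfl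

lemma groverShift_deltaPt (q : Site d × ArcLabel d) :
    groverShift (deltaPt q) = deltaPt (arcReverse q) := by
  funext p
  simp only [groverShift_eq_comp, Function.comp_apply, deltaPt,
    arcReverse_involutive.eq_iff]

lemma groverShift_neg (ψ : Site d × ArcLabel d → ℂ) : groverShift (-ψ) = -groverShift ψ := rfl

lemma groverShift_add (ψ φ : Site d × ArcLabel d → ℂ) :
    groverShift (ψ + φ) = groverShift ψ + groverShift φ := rfl

lemma groverShift_sub (ψ φ : Site d × ArcLabel d → ℂ) :
    groverShift (ψ - φ) = groverShift ψ - groverShift φ := rfl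

lemma groverCoin_smul (c : ℂ) (ψ : Site d × ArcLabel d → ℂ) :
    groverCoin (c • ψ) = c • groverCoin ψ := by
  funext p
  simp only [groverCoin, Pi.smul_apply, smul_eq_mul, ← Finset.mul_sum]
  ring

lemma groverU_smul (c : ℂ) (ψ : Site d × ArcLabel d → ℂ) :
    groverU (c • ψ) = c • groverU ψ := by
  rw [groverU, groverCoin_smul]
  rfl

lemma groverCoin_eq_neg_of_sum_eq_zero {ψ : Site d × ArcLabel d → ℂ}
    (h : ∀ x, ∑ b : ArcLabel d, ψ (x, b) = 0) : groverCoin ψ = -ψ := by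
  funext p
  simp [groverCoin, h p.1]

lemma groverU_eq_neg {ψ : Site d × ArcLabel d → ℂ} (hS : groverShift ψ = ψ)
    (hC : ∀ x, ∑ b : ArcLabel d, ψ (x, b) = 0) : groverU ψ = -ψ := by
  rw [groverU, groverCoin_eq_neg_of_sum_eq_zero hC, groverShift_neg, hS]

lemma iterate_groverU_of_eq_smul {ψ : Site d × ArcLabel d → ℂ} {c : ℂ}
    (h : groverU ψ = c • ψ) (n : ℕ) : groverU^[n] ψ = c ^ n • ψ := by
  induction n with
  | zero => simp
  | succ n ih => rw [Function.iterate_succ_apply', ih, groverU_smul, h, smul_smul, pow_succ]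

lemma limsup_findingProb_pos_of_eq_smul {ψ : Site d × ArcLabel d → ℂ} {c : ℂ} (hc : ‖c‖ = 1)
    (h : groverU ψ = c • ψ) {x : Site d} {a : ArcLabel d} (ha : ψ (x, a) ≠ 0) :
    0 < Filter.limsup (fun n : ℕ => ∑ b : ArcLabel d, ‖(groverU^[n] ψ) (x, b)‖ ^ 2)
      Filter.atTop := by
  have hconst : (fun n : ℕ => ∑ b : ArcLabel d, ‖(groverU^[n] ψ) (x, b)‖ ^ 2)
      = fun _ => ∑ b : ArcLabel d, ‖ψ (x, b)‖ ^ 2 := by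
    funext n
    simp [iterate_groverU_of_eq_smul h, hc]
  rw [hconst, Filter.limsup_const]
  exact Finset.sum_pos' (fun b _ => by positivity) ⟨a, Finset.mem_univ a, by positivity⟩

end Walk

lemma exists_smul_tsum_norm_sq_eq_one {α : Type*} {ψ : α → ℂ}
    (hψ : Summable fun p => ‖ψ p‖ ^ 2) {q : α} (hq : ψ q ≠ 0) :
    ∃ r : ℂ, r ≠ 0 ∧ ∑' p, ‖(r • ψ) p‖ ^ 2 = 1 := by
  set N := ∑' p, ‖ψ p‖ ^ 2
  have hN : 0 < N := hψ.tsum_pos (fun _ => by positivity) q (by positivity)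
  refine ⟨((√N)⁻¹ : ℝ), by simpa [Real.sqrt_eq_zero', not_le] using hN, ?_⟩
  simp only [Pi.smul_apply, smul_eq_mul, norm_mul, mul_pow, Complex.norm_real, norm_inv,
    Real.norm_eq_abs, abs_of_nonneg (Real.sqrt_nonneg N), inv_pow, Real.sq_sqrt hN.le,
    tsum_mul_left]
  exact inv_mul_cancel₀ hN.ne'

section Plaquette

variable {d : ℕ}

noncomputable def arcPairState (q : Site d × ArcLabel d) : Site d × ArcLabel d → ℂ :=
  deltaPt q + deltaPt (arcReverse q)

/-- `±1` on the eight arcs around the unit square spanned by `e_i, e_j`: `+1` on the edges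
parallel to `e_i`, `−1` on those parallel to `e_j`. -/
noncomputable def plaquetteState (i j : Fin d) : Site d × ArcLabel d → ℂ :=
  arcPairState (0, (i, true)) + arcPairState (Pi.single j 1, (i, true))
    - arcPairState (0, (j, true)) - arcPairState (Pi.single i 1, (j, true))

lemma groverShift_arcPairState (q : Site d × ArcLabel d) :
    groverShift (arcPairState q) = arcPairState q := by
  rw [arcPairState, groverShift_add, groverShift_deltaPt, groverShift_deltaPt,
    arcReverse_involutive q, add_comm]

lemma groverShift_plaquetteState (i j : Fin d) :
    groverShift (plaquetteState i j) = plaquetteState i j := by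
  simp only [plaquetteState, groverShift_add, groverShift_sub, groverShift_arcPairState]

lemma sum_deltaPt (s x : Site d) (a : ArcLabel d) :
    ∑ b : ArcLabel d, deltaPt (s, a) (x, b) = if x = s then 1 else 0 := by
  by_cases hx : x = s <;> simp [deltaPt, hx]

lemma sum_arcPairState (s x : Site d) (i : Fin d) :
    ∑ b : ArcLabel d, arcPairState (s, (i, true)) (x, b)
      = (if x = s then 1 else 0) + if x = s + Pi.single i 1 then 1 else 0 := by
  rw [arcPairState, arcReverse]
  simp only [Pi.add_apply, Finset.sum_add_distrib, sum_deltaPt, stepSite_true]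

/-- Each corner of the square meets one `e_i`-edge and one `e_j`-edge. -/
lemma sum_plaquetteState (i j : Fin d) (x : Site d) :
    ∑ b : ArcLabel d, plaquetteState i j (x, b) = 0 := by
  simp only [plaquetteState, Pi.add_apply, Pi.sub_apply, Finset.sum_add_distrib,
    Finset.sum_sub_distrib, sum_arcPairState, zero_add,
    add_comm (Pi.single j (1 : ℤ) : Site d)]
  ring

lemma groverU_plaquetteState (i j : Fin d) :
    groverU (plaquetteState i j) = (-1 : ℂ) • plaquetteState i j := by
  rw [neg_one_smul]
  exact groverU_eq_neg (groverShift_plaquetteState i j) (sum_plaquetteState i j)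

lemma hasFiniteSupport_deltaPt (q : Site d × ArcLabel d) : (deltaPt q).HasFiniteSupport :=
  (Set.finite_singleton q).subset fun _ hp => by_contra fun hpq => hp (if_neg hpq)

lemma hasFiniteSupport_arcPairState (q : Site d × ArcLabel d) :
    (arcPairState q).HasFiniteSupport :=
  (hasFiniteSupport_deltaPt q).add (hasFiniteSupport_deltaPt _)

lemma hasFiniteSupport_plaquetteState (i j : Fin d) :
    (plaquetteState i j).HasFiniteSupport :=
  (((hasFiniteSupport_arcPairState _).add (hasFiniteSupport_arcPairState _)).sub
    (hasFiniteSupport_arcPairState _)).sub (hasFiniteSupport_arcPairState _)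

lemma plaquetteState_apply_origin {i j : Fin d} (hij : i ≠ j) :
    plaquetteState i j (0, (i, true)) = 1 := by
  have hi : (Pi.single i 1 : Site d) ≠ 0 := by simp
  have hj : (Pi.single j 1 : Site d) ≠ 0 := by simp
  simp [plaquetteState, arcPairState, deltaPt, arcReverse, stepSite_true, hij, hi.symm, hj.symm]

end Plaquette

/-- For `d ≥ 2`, localization occurs for the Grover walk on `ℤ^d`: there is a
unit initial state `Ψ₀ ∈ ℓ²(ℤ^d × A)` such that the finding probability at the origin does not
vanish in the limit, `limsup_{n→∞} ∑_{a∈A} |(UⁿΨ₀)(0,a)|² > 0`. -/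
theorem grover_zd_localization (d : ℕ) (hd : 2 ≤ d) :
    ∃ Ψ₀ : Site d × ArcLabel d → ℂ,
      (∑' p : Site d × ArcLabel d, ‖Ψ₀ p‖ ^ 2) = 1 ∧
      0 < Filter.limsup
          (fun n : ℕ => ∑ a : ArcLabel d, ‖(groverU^[n] Ψ₀) (0, a)‖ ^ 2)
          Filter.atTop := by
  let i : Fin d := ⟨0, by omega⟩
  let j : Fin d := ⟨1, by omega⟩
  have hij : i ≠ j := by simp [i, j, Fin.ext_iff]
  have hψ := plaquetteState_apply_origin hij
  have hsum : Summable fun p => ‖plaquetteState i j p‖ ^ 2 :=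
    summable_of_hasFiniteSupport ((hasFiniteSupport_plaquetteState i j).fun_comp
      (g := fun z : ℂ => ‖z‖ ^ 2) (by simp))
  obtain ⟨r, hr, hnorm⟩ := exists_smul_tsum_norm_sq_eq_one hsum (hψ ▸ one_ne_zero)
  refine ⟨r • plaquetteState i j, hnorm, limsup_findingProb_pos_of_eq_smul (c := -1) (by simp)
    ?_ (a := (i, true)) (by simp [hψ, hr])⟩
  rw [groverU_smul, groverU_plaquetteState, smul_comm]
end
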